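/- Let A be definite and irreducible, and let x = ∏_k ((A*)_{·k})^{λ_k} componentwise with λ_k > 0 and Σ_k λ_k = 1 (a positive log-convex combination of all columns of A*). Then for X = diag(x), the matrix X⁻¹AX is strictly visualized. -/

import Mathlib

/-!
Every cycle of `A` has weight at most `1`, so cutting cycles out of a walk never decreases its
weight: `A*` dominates every walk, is transitive with unit diagonal, satisfies
`A i j * A* j k ≤ A* i k`, and is positive by irreducibility. An edge `(i, j)` is critical exactly
when it closes a walk from `j` back to `i` into a cycle of weight `1`, i.e. when
`A i j * A* j i = 1`; then row `i` of `A*` is `A i j` times row `j`. Hence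
`A i j * x j = ∏ k, (A i j * A* j k) ^ c k ≤ ∏ k, (A* i k) ^ c k = x i`, with equality on critical
edges, while on the other edges the factor `k = i` is strictly smaller, as
`A i j * A* j i < 1 = A* i i` and `c i > 0`.
-/

open Finset

/-- Max-times matrix product: `(A ⊗ B) i j = max_k (A i k * B k j)`. -/
noncomputable def mProd {n : ℕ} (A B : Matrix (Fin n) (Fin n) NNReal) :
    Matrix (Fin n) (Fin n) NNReal :=
  fun i j => univ.sup fun k => A i k * B k j

/-- Max-algebraic matrix powers, `mPow A 0 = I`. -/
noncomputable def mPow {n : ℕ} (A : Matrix (Fin n) (Fin n) NNReal) :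
    ℕ → Matrix (Fin n) (Fin n) NNReal
  | 0 => fun i j => if i = j then 1 else 0
  | k + 1 => mProd (mPow A k) A

/-- Kleene star `A* = I ⊕ A ⊕ ... ⊕ A^{n-1}` in max algebra. -/
noncomputable def klStar {n : ℕ} (A : Matrix (Fin n) (Fin n) NNReal) :
    Matrix (Fin n) (Fin n) NNReal :=
  fun i j => (Finset.range n).sup fun k => mPow A k i j

/-- Partial "sums" `I ⊕ A ⊕ ... ⊕ A^m` of the Kleene star series. -/
noncomputable def kPartial {n : ℕ} (A : Matrix (Fin n) (Fin n) NNReal) (m : ℕ) :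
    Matrix (Fin n) (Fin n) NNReal :=
  fun i j => (Finset.range (m + 1)).sup fun k => mPow A k i j

/-- The weight of the cycle given by the list `l` (with wrap-around edge). -/
def cycleWeight {n : ℕ} (A : Matrix (Fin n) (Fin n) NNReal) (l : List (Fin n)) : NNReal :=
  ((l.zip (l.rotate 1)).map fun p => A p.1 p.2).prod

/-- The geometric mean of a cycle: `w(σ,A)^{1/k}`. -/
noncomputable def cycleMean {n : ℕ} (A : Matrix (Fin n) (Fin n) NNReal) (l : List (Fin n)) :
    NNReal :=
  (cycleWeight A l) ^ ((l.length : ℝ)⁻¹)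

/-- The maximum cycle geometric mean `λ(A)`. -/
noncomputable def maxCycleMean {n : ℕ} (A : Matrix (Fin n) (Fin n) NNReal) : NNReal :=
  sSup {x | ∃ l : List (Fin n), l ≠ [] ∧ x = cycleMean A l}

/-- `(i,j)` is a critical edge: it lies on a cycle attaining `λ(A)`. -/
def criticalEdge {n : ℕ} (A : Matrix (Fin n) (Fin n) NNReal) (i j : Fin n) : Prop :=
  ∃ l : List (Fin n), l ≠ [] ∧ cycleMean A l = maxCycleMean A ∧ (i, j) ∈ l.zip (l.rotate 1)

/-- Max-algebraic matrix-vector product. -/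
noncomputable def mVec {n : ℕ} (A : Matrix (Fin n) (Fin n) NNReal) (x : Fin n → NNReal) :
    Fin n → NNReal :=
  fun i => univ.sup fun j => A i j * x j

lemma List.getLastD_append {α : Type*} (a : α) (l₁ l₂ : List α) :
    (l₁ ++ l₂).getLastD a = l₂.getLastD (l₁.getLastD a) := by
  induction l₁ generalizing a with
  | nil => rfl
  | cons b l₁ ih => simp only [List.cons_append, List.getLastD_cons, ih]

lemma List.exists_eq_append_append_of_not_nodup {α : Type*} {l : List α} (h : ¬ l.Nodup) :
    ∃ (v : α) (l₁ l₂ l₃ : List α), l = l₁ ++ v :: l₂ ++ v :: l₃ := by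
  induction l with
  | nil => simp at h
  | cons a t ih =>
    by_cases ha : a ∈ t
    · obtain ⟨s, r, rfl⟩ := List.append_of_mem ha
      exact ⟨a, [], s, r, rfl⟩
    · obtain ⟨v, l₁, l₂, l₃, rfl⟩ := ih (by simpa [ha] using h)
      exact ⟨v, a :: l₁, l₂, l₃, rfl⟩

/-- For `z = a`, the pairs in `(a :: t).zip (t ++ [z])` are the edges of the cycle `a :: t`. -/
lemma List.exists_eq_append_cons_of_mem_zip {α : Type*} {a z i j : α} {t : List α}
    (h : (i, j) ∈ (a :: t).zip (t ++ [z])) :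
    ∃ s v : List α, t ++ [z] = s ++ j :: v ∧ s.getLastD a = i := by
  induction t generalizing a with
  | nil =>
    obtain ⟨rfl, rfl⟩ : i = a ∧ j = z := by simpa using h
    exact ⟨[], [], rfl, rfl⟩
  | cons b t ih =>
    rcases List.mem_cons.mp h with hab | htail
    · obtain ⟨rfl, rfl⟩ := Prod.mk.inj hab
      exact ⟨[], t ++ [z], rfl, rfl⟩
    · obtain ⟨s, v, hsv, hs⟩ := ih htail
      exact ⟨b :: s, v, by simp [hsv], by rwa [List.getLastD_cons]⟩

section Walks

variable {n : ℕ} (A : Matrix (Fin n) (Fin n) NNReal)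

/-- A walk is encoded by its start `i` and the list `l` of vertices visited after it,
so it ends at `l.getLastD i`. -/
def walkWeight : Fin n → List (Fin n) → NNReal
  | _, [] => 1
  | i, j :: l => A i j * walkWeight j l

@[simp] lemma walkWeight_nil (i : Fin n) : walkWeight A i [] = 1 := rfl

@[simp] lemma walkWeight_cons (i j : Fin n) (l : List (Fin n)) :
    walkWeight A i (j :: l) = A i j * walkWeight A j l := rfl

lemma walkWeight_append (i : Fin n) (l₁ l₂ : List (Fin n)) :
    walkWeight A i (l₁ ++ l₂) = walkWeight A i l₁ * walkWeight A (l₁.getLastD i) l₂ := by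
  induction l₁ generalizing i with
  | nil => simp
  | cons j l₁ ih => simp only [List.cons_append, walkWeight_cons, ih, List.getLastD_cons, mul_assoc]

lemma walkWeight_concat (i : Fin n) (l : List (Fin n)) (j : Fin n) :
    walkWeight A i (l ++ [j]) = walkWeight A i l * A (l.getLastD i) j := by
  simp [walkWeight_append]

lemma prod_map_zip_eq_walkWeight (a z : Fin n) (t : List (Fin n)) :
    (((a :: t).zip (t ++ [z])).map fun p => A p.1 p.2).prod = walkWeight A a (t ++ [z]) := by
  induction t generalizing a with
  | nil => simp
  | cons b t ih => simp [← ih]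

lemma cycleWeight_cons (a : Fin n) (t : List (Fin n)) :
    cycleWeight A (a :: t) = walkWeight A a (t ++ [a]) := by
  rw [cycleWeight, List.rotate_cons_succ, List.rotate_zero, prod_map_zip_eq_walkWeight]

lemma cycleWeight_eq_cycleMean_rpow {l : List (Fin n)} (hl : l ≠ []) :
    cycleWeight A l = cycleMean A l ^ (l.length : ℝ) := by
  have hlen : (l.length : ℝ) ≠ 0 := by simpa using hl
  rw [cycleMean, ← NNReal.rpow_mul, inv_mul_cancel₀ hlen, NNReal.rpow_one]

lemma walkWeight_le_mPow (i : Fin n) (l : List (Fin n)) :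
    walkWeight A i l ≤ mPow A l.length i (l.getLastD i) := by
  induction l using List.reverseRecOn with
  | nil => simp [mPow]
  | append_singleton l j ih =>
    rw [walkWeight_concat, List.length_append, List.length_singleton, List.getLastD_concat]
    exact (mul_le_mul_left ih _).trans <|
      Finset.le_sup (f := fun k => mPow A l.length i k * A k j) (Finset.mem_univ _)

lemma exists_walkWeight_eq_mPow (m : ℕ) (i j : Fin n) (h : mPow A m i j ≠ 0) :
    ∃ l : List (Fin n), l.getLastD i = j ∧ walkWeight A i l = mPow A m i j := by
  induction m generalizing j with
  | zero =>
    have hij : i = j := by by_contra hij; simp [mPow, hij] at h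
    exact ⟨[], hij, by simp [mPow, hij]⟩
  | succ m ih =>
    obtain ⟨k, -, hk⟩ := Finset.exists_mem_eq_sup Finset.univ ⟨i, Finset.mem_univ i⟩
      (fun k => mPow A m i k * A k j)
    change mPow A (m + 1) i j = mPow A m i k * A k j at hk
    obtain ⟨l, hl, hw⟩ := ih k (left_ne_zero_of_mul (hk ▸ h))
    exact ⟨l ++ [j], List.getLastD_concat, by rw [walkWeight_concat, hl, hw, hk]⟩

lemma exists_walkWeight_eq_klStar (i j : Fin n) (h : klStar A i j ≠ 0) :
    ∃ l : List (Fin n), l.getLastD i = j ∧ walkWeight A i l = klStar A i j := by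
  obtain ⟨m, -, hm⟩ := Finset.exists_mem_eq_sup (Finset.range n)
    ⟨0, Finset.mem_range.mpr i.pos⟩ (fun m => mPow A m i j)
  change klStar A i j = mPow A m i j at hm
  rw [hm] at h ⊢
  exact exists_walkWeight_eq_mPow A m i j h

end Walks

section Definite

variable {n : ℕ} {A : Matrix (Fin n) (Fin n) NNReal}

lemma cycleWeight_le_one (hdef : maxCycleMean A = 1) {l : List (Fin n)} (hl : l ≠ []) :
    cycleWeight A l ≤ 1 := by
  have hbdd : BddAbove {x | ∃ l : List (Fin n), l ≠ [] ∧ x = cycleMean A l} := by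
    by_contra h
    rw [maxCycleMean, csSup_of_not_bddAbove h, csSup_empty] at hdef
    exact zero_ne_one hdef
  have hmean : cycleMean A l ≤ 1 := hdef ▸ le_csSup hbdd ⟨l, hl, rfl⟩
  exact cycleWeight_eq_cycleMean_rpow A hl ▸ NNReal.rpow_le_one hmean (by positivity)

lemma walkWeight_le_one_of_getLastD_eq (hdef : maxCycleMean A = 1) {i : Fin n}
    {l : List (Fin n)} (hl : l.getLastD i = i) : walkWeight A i l ≤ 1 := by
  rcases List.eq_nil_or_concat l with rfl | ⟨t, k, rfl⟩
  · simp
  · rw [List.concat_eq_append, List.getLastD_concat] at hl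
    rw [List.concat_eq_append, hl]
    exact cycleWeight_cons A i t ▸ cycleWeight_le_one hdef (List.cons_ne_nil _ _)

lemma exists_closed_subwalk {i : Fin n} {l : List (Fin n)} (hl : n ≤ l.length) :
    ∃ l₁ l₂ l₃ : List (Fin n), l = l₁ ++ l₂ ++ l₃ ∧ l₂ ≠ [] ∧
      l₂.getLastD (l₁.getLastD i) = l₁.getLastD i := by
  have hdup : ¬ (i :: l).Nodup := fun hnd => by
    have := hnd.length_le_card
    simp only [List.length_cons, Fintype.card_fin] at this
    omega
  obtain ⟨v, l₁, l₂, l₃, hsplit⟩ := List.exists_eq_append_append_of_not_nodup hdup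
  rcases l₁ with _ | ⟨a, l₁⟩
  · obtain ⟨rfl, rfl⟩ : v = i ∧ l₂ ++ v :: l₃ = l := by simpa using hsplit.symm
    exact ⟨[], l₂ ++ [v], l₃, by simp, by simp, List.getLastD_concat⟩
  · obtain ⟨rfl, rfl⟩ : a = i ∧ l₁ ++ v :: l₂ ++ v :: l₃ = l := by simpa using hsplit.symm
    exact ⟨l₁ ++ [v], l₂ ++ [v], l₃, by simp, by simp, by simp only [List.getLastD_concat]⟩

lemma exists_short_walk (hdef : maxCycleMean A = 1) (i : Fin n) (l : List (Fin n)) :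
    ∃ l' : List (Fin n), l'.length < n ∧ l'.getLastD i = l.getLastD i ∧
      walkWeight A i l ≤ walkWeight A i l' := by
  induction hlen : l.length using Nat.strong_induction_on generalizing l with
  | _ m ih =>
  by_cases hm : m < n
  · exact ⟨l, hlen ▸ hm, rfl, le_rfl⟩
  obtain ⟨l₁, l₂, l₃, rfl, hl₂, hclosed⟩ := exists_closed_subwalk (i := i) (hlen ▸ not_lt.mp hm)
  have hshorter : (l₁ ++ l₃).length < m := by
    subst hlen
    simpa using List.length_pos_iff.mpr hl₂
  obtain ⟨l', hl'len, hl'end, hl'w⟩ := ih _ hshorter (l₁ ++ l₃) rfl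
  refine ⟨l', hl'len, ?_, le_trans ?_ hl'w⟩
  · rw [hl'end, List.getLastD_append, List.getLastD_append, List.getLastD_append, hclosed]
  · rw [walkWeight_append, walkWeight_append, walkWeight_append, List.getLastD_append, hclosed]
    exact mul_le_mul_left
      (mul_le_of_le_one_right' (walkWeight_le_one_of_getLastD_eq hdef hclosed)) _

lemma walkWeight_le_klStar (hdef : maxCycleMean A = 1) (i : Fin n) (l : List (Fin n)) :
    walkWeight A i l ≤ klStar A i (l.getLastD i) := by
  obtain ⟨l', hlen, hend, hw⟩ := exists_short_walk hdef i l
  rw [← hend]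
  exact hw.trans <| (walkWeight_le_mPow A i l').trans <|
    Finset.le_sup (f := fun m => mPow A m i (l'.getLastD i)) (Finset.mem_range.mpr hlen)

lemma mPow_le_klStar (hdef : maxCycleMean A = 1) (m : ℕ) (i j : Fin n) :
    mPow A m i j ≤ klStar A i j := by
  by_cases h : mPow A m i j = 0
  · simp [h]
  obtain ⟨l, rfl, hw⟩ := exists_walkWeight_eq_mPow A m i j h
  exact hw ▸ walkWeight_le_klStar hdef i l

lemma klStar_self (hdef : maxCycleMean A = 1) (i : Fin n) : klStar A i i = 1 := by
  refine le_antisymm (Finset.sup_le fun m _ => ?_) ?_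
  · by_cases h : mPow A m i i = 0
    · simp [h]
    obtain ⟨l, hl, hw⟩ := exists_walkWeight_eq_mPow A m i i h
    exact hw ▸ walkWeight_le_one_of_getLastD_eq hdef hl
  · simpa [mPow] using mPow_le_klStar hdef 0 i i

lemma klStar_mul_klStar_le (hdef : maxCycleMean A = 1) (i j k : Fin n) :
    klStar A i j * klStar A j k ≤ klStar A i k := by
  by_cases h : klStar A i j * klStar A j k = 0
  · simp [h]
  obtain ⟨l₁, hl₁, hw₁⟩ := exists_walkWeight_eq_klStar A i j (left_ne_zero_of_mul h)
  obtain ⟨l₂, hl₂, hw₂⟩ := exists_walkWeight_eq_klStar A j k (right_ne_zero_of_mul h)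
  have := walkWeight_le_klStar hdef i (l₁ ++ l₂)
  rwa [walkWeight_append, List.getLastD_append, hl₁, hl₂, hw₁, hw₂] at this

lemma mul_klStar_le (hdef : maxCycleMean A = 1) (i j k : Fin n) :
    A i j * klStar A j k ≤ klStar A i k := by
  by_cases h : klStar A j k = 0
  · simp [h]
  obtain ⟨l, hl, hw⟩ := exists_walkWeight_eq_klStar A j k h
  have := walkWeight_le_klStar hdef i (j :: l)
  rwa [walkWeight_cons, List.getLastD_cons, hl, hw] at this

lemma klStar_pos (hdef : maxCycleMean A = 1)
    (hirr : ∀ i j : Fin n, i ≠ j → ∃ k : ℕ, 0 < mPow A k i j) (i j : Fin n) :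
    0 < klStar A i j := by
  by_cases h : i = j
  · simp [h, klStar_self hdef]
  obtain ⟨m, hm⟩ := hirr i j h
  exact hm.trans_le (mPow_le_klStar hdef m i j)

end Definite

section Critical

variable {n : ℕ} {A : Matrix (Fin n) (Fin n) NNReal} {i j : Fin n}

lemma criticalEdge.mul_klStar_eq_one (hdef : maxCycleMean A = 1) (h : criticalEdge A i j) :
    A i j * klStar A j i = 1 := by
  obtain ⟨l, hl, hmean, hmem⟩ := h
  obtain ⟨a, t, rfl⟩ := List.exists_cons_of_ne_nil hl
  have hweight : walkWeight A a (t ++ [a]) = 1 := by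
    rw [← cycleWeight_cons, cycleWeight_eq_cycleMean_rpow A hl, hmean, hdef, NNReal.one_rpow]
  rw [List.rotate_cons_succ, List.rotate_zero] at hmem
  obtain ⟨s, v, hsv, hs⟩ := List.exists_eq_append_cons_of_mem_zip hmem
  have hv : v.getLastD j = a := by
    have := congrArg (List.getLastD · a) hsv
    simp only [List.getLastD_append, List.getLastD_cons] at this
    exact this.symm
  -- the cycle, read from `j` onwards, is a walk from `j` back to `i`
  have hrot : A i j * walkWeight A j (v ++ s) = 1 := by
    rw [hsv, walkWeight_append, walkWeight_cons, hs] at hweight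
    rw [walkWeight_append, hv, ← hweight]
    ring
  refine le_antisymm ((mul_klStar_le hdef i j i).trans (klStar_self hdef i).le) ?_
  have := walkWeight_le_klStar hdef j (v ++ s)
  rw [List.getLastD_append, hv, hs] at this
  exact hrot ▸ mul_le_mul_right this _

lemma criticalEdge_of_mul_klStar_eq_one (hdef : maxCycleMean A = 1)
    (h : A i j * klStar A j i = 1) : criticalEdge A i j := by
  obtain ⟨l, hl, hw⟩ := exists_walkWeight_eq_klStar A j i (right_ne_zero_of_mul_eq_one h)
  -- closing the walk `j → i` with the edge `(i, j)` gives a cycle of weight one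
  have hcycle : (j :: l).dropLast ++ [i] = j :: l := by
    rw [← hl, ← List.getLast_eq_getLastD (List.cons_ne_nil j l)]
    exact List.dropLast_append_getLast _
  refine ⟨i :: (j :: l).dropLast, List.cons_ne_nil _ _, ?_, ?_⟩
  · rw [cycleMean, cycleWeight_cons, hcycle, walkWeight_cons, hw, h, NNReal.one_rpow, hdef]
  · rw [List.rotate_cons_succ, List.rotate_zero, hcycle]
    exact List.mem_cons_self

lemma mul_klStar_lt_one_of_not_criticalEdge (hdef : maxCycleMean A = 1)
    (h : ¬ criticalEdge A i j) : A i j * klStar A j i < 1 :=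
  lt_of_le_of_ne ((mul_klStar_le hdef i j i).trans (klStar_self hdef i).le)
    (fun h' => h (criticalEdge_of_mul_klStar_eq_one hdef h'))

lemma criticalEdge.mul_klStar_eq (hdef : maxCycleMean A = 1) (h : criticalEdge A i j)
    (k : Fin n) : A i j * klStar A j k = klStar A i k := by
  refine le_antisymm (mul_klStar_le hdef i j k) ?_
  calc klStar A i k = A i j * klStar A j i * klStar A i k := by
        rw [h.mul_klStar_eq_one hdef, one_mul]
    _ = A i j * (klStar A j i * klStar A i k) := mul_assoc _ _ _
    _ ≤ A i j * klStar A j k := mul_le_mul_right (klStar_mul_klStar_le hdef j i k) _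

end Critical

lemma NNReal.mul_prod_rpow_of_sum_eq_one {ι : Type*} (s : Finset ι) {c : ι → ℝ}
    (hc : ∑ k ∈ s, c k = 1) {a : NNReal} (ha : a ≠ 0) (b : ι → NNReal) :
    a * ∏ k ∈ s, b k ^ c k = ∏ k ∈ s, (a * b k) ^ c k := by
  have hconst : ∏ k ∈ s, a ^ c k = a := by
    rw [← NNReal.coe_inj]
    push_cast
    rw [← Real.rpow_sum_of_pos (by positivity), hc, Real.rpow_one]
  simp_rw [NNReal.mul_rpow, Finset.prod_mul_distrib, hconst]

/-- for definite irreducible `A`, a positive log-convex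
combination `x` of all columns of `A*` gives a strict visualization `X⁻¹AX`. -/
theorem stmt_16 {n : ℕ} (A : Matrix (Fin n) (Fin n) NNReal)
    (hdef : maxCycleMean A = 1)
    (hirr : ∀ i j : Fin n, i ≠ j → ∃ k : ℕ, 0 < mPow A k i j)
    (c : Fin n → ℝ) (hc : ∀ k, 0 < c k) (hsum : (∑ k, c k) = 1)
    (x : Fin n → NNReal) (hx : ∀ i, x i = ∏ k, (klStar A i k) ^ (c k)) :
    (∀ i, 0 < x i) ∧
    (∀ i j, criticalEdge A i j → (x i)⁻¹ * A i j * x j = 1) ∧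
    (∀ i j, ¬ criticalEdge A i j → (x i)⁻¹ * A i j * x j < 1) := by
  have hpos : ∀ i, 0 < x i := fun i => hx i ▸
    Finset.prod_pos fun k _ => NNReal.rpow_pos (klStar_pos hdef hirr i k)
  have hAx : ∀ i j, A i j ≠ 0 → A i j * x j = ∏ k, (A i j * klStar A j k) ^ c k :=
    fun i j hA => by rw [hx j, NNReal.mul_prod_rpow_of_sum_eq_one _ hsum hA]
  refine ⟨hpos, fun i j hij => ?_, fun i j hij => ?_⟩
  · have hA : A i j ≠ 0 := left_ne_zero_of_mul_eq_one (hij.mul_klStar_eq_one hdef)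
    rw [mul_assoc, inv_mul_eq_one₀ (hpos i).ne', hAx i j hA, hx i]
    simp_rw [hij.mul_klStar_eq hdef]
  · rw [mul_assoc, inv_mul_lt_one₀ (hpos i)]
    by_cases hA : A i j = 0
    · simpa [hA] using hpos i
    rw [hAx i j hA, hx i]
    refine Finset.prod_lt_prod (fun k _ => ?_) (fun k _ => ?_) ⟨i, Finset.mem_univ i, ?_⟩
    · exact NNReal.rpow_pos (mul_pos (pos_iff_ne_zero.mpr hA) (klStar_pos hdef hirr j k))
    · exact NNReal.rpow_le_rpow (mul_klStar_le hdef i j k) (hc k).le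
    · rw [klStar_self hdef i]
      exact NNReal.rpow_lt_rpow (mul_klStar_lt_one_of_not_criticalEdge hdef hij) (hc i)
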